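/- Let G be a subgroup of Homeo₊(ℝ) acting freely on ℝ (every nonidentity element is fixed-point free). Then G admits an invariant Radon measure on ℝ. -/

import Mathlib

open Set MeasureTheory
open scoped NNReal

/-- Orientation-preserving homeomorphisms of ℝ, modelled as order-isomorphisms of ℝ
(every order-isomorphism of ℝ is a strictly increasing homeomorphism and conversely). -/
abbrev HomeoR := ℝ ≃o ℝ

/-- The fixed point set of `f`. -/
def FixSet (f : HomeoR) : Set ℝ := {x : ℝ | f x = x}

/-- `f` and `g` are crossed with `f` in the distinguished role: there is an interval
`(a,b)` with endpoints possibly `±∞` such that `Fix(f) ∩ [a,b] = {a,b}` while `g`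
maps `a` or `b` into `(a,b)`. -/
def CrossedAt (f g : HomeoR) : Prop :=
  ∃ a b : EReal, a < b ∧
    ({x : ℝ | a ≤ (x : EReal) ∧ (x : EReal) ≤ b} ∩ FixSet f
      = {x : ℝ | (x : EReal) = a ∨ (x : EReal) = b}) ∧
    (∃ x : ℝ, ((x : EReal) = a ∨ (x : EReal) = b) ∧
      a < (g x : EReal) ∧ (g x : EReal) < b)

/-- Two elements are crossed. -/
def Crossed (f g : HomeoR) : Prop := CrossedAt f g ∨ CrossedAt g f

/-- `μ` is a (nonzero) `G`-invariant Radon measure on ℝ. -/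
def InvariantRadon (G : Subgroup HomeoR) (μ : Measure ℝ) : Prop :=
  μ ≠ 0 ∧ IsFiniteMeasureOnCompacts μ ∧ ∀ g ∈ G, Measure.map (⇑g) μ = μ

/-- `Λ` is a nonempty minimal closed `G`-invariant subset of ℝ. -/
def MinimalSet (G : Subgroup HomeoR) (Λ : Set ℝ) : Prop :=
  Λ.Nonempty ∧ IsClosed Λ ∧ (∀ g ∈ G, ⇑g '' Λ = Λ) ∧
    ∀ Λ' ⊆ Λ, Λ'.Nonempty → IsClosed Λ' → (∀ g ∈ G, ⇑g '' Λ' = Λ') → Λ' = Λ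

/-!
Comparing elements of `G` by their value at `0` is, thanks to the intermediate value theorem
and freeness, a bi-invariant archimedean linear order on `G`. By Hölder's theorem `G` is then
abelian and embeds into `(ℝ, +)` by an order-preserving homomorphism `T`. The function
`F x = sup {T g | g 0 ≤ x}` satisfies `F ∘ g = T g + F`, so the Stieltjes measure of `F` is
`G`-invariant; it is nonzero as soon as `G` is nontrivial, and for trivial `G` Lebesgue measure
does the job.
-/

open Filter Topology
open scoped commutatorElement

theorem RelIso.coe_pow {α : Type*} {r : α → α → Prop} (e : r ≃r r) (n : ℕ) :
    ⇑(e ^ n) = (⇑e)^[n] := by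
  induction n with
  | zero => rfl
  | succ n ih => rw [pow_succ, coe_mul, ih, Function.iterate_succ]

theorem lt_apply_of_lt_apply_of_ne {f : ℝ → ℝ} (hf : Continuous f) (hfix : ∀ z, f z ≠ z)
    {x : ℝ} (hx : x < f x) (y : ℝ) : y < f y := by
  by_contra! hy
  obtain ⟨z, hz⟩ := intermediate_value_univ y x (hf.sub continuous_id)
    (show (0 : ℝ) ∈ Icc _ _ from ⟨sub_nonpos.2 hy, sub_nonneg.2 hx.le⟩)
  exact hfix z (sub_eq_zero.1 hz)

theorem exists_lt_iterate_of_forall_lt_apply {f : ℝ → ℝ} (hf : Continuous f)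
    (hlt : ∀ z, z < f z) (x y : ℝ) : ∃ n : ℕ, y < f^[n] x := by
  by_contra! hbdd
  have hmono : Monotone fun n => f^[n] x := monotone_nat_of_le_succ fun n => by
    rw [Function.iterate_succ_apply']
    exact (hlt _).le
  have hlim := tendsto_atTop_ciSup hmono ⟨y, forall_mem_range.2 hbdd⟩
  exact (hlt _).ne' (isFixedPt_of_tendsto_iterate hlim hf.continuousAt)

section Holder

variable {H : Type*} [Group H] [LinearOrder H] [MulLeftMono H] [MulRightMono H]

theorem exists_mul_self_le_of_not_one_covBy {c : H} (hc : 1 < c) (hcov : ¬1 ⋖ c) :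
    ∃ d : H, 1 < d ∧ d * d ≤ c := by
  obtain ⟨p, hp, hpc⟩ : ∃ p, 1 < p ∧ p < c := by
    simpa [CovBy, hc] using hcov
  have hq : 1 < p⁻¹ * c := lt_inv_mul_iff_mul_lt.2 (by simpa using hpc)
  refine ⟨min p (p⁻¹ * c), lt_min hp hq, ?_⟩
  calc min p (p⁻¹ * c) * min p (p⁻¹ * c) ≤ p * (p⁻¹ * c) := mul_le_mul' (min_le_left _ _)
        (min_le_right _ _)
    _ = c := mul_inv_cancel_left p c

variable (harch : ∀ (x : H) {y : H}, 1 < y → ∃ n : ℕ, x ≤ y ^ n)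
include harch

theorem exists_zpow_le_lt {d : H} (hd : 1 < d) (g : H) :
    ∃ m : ℤ, d ^ m ≤ g ∧ g < d ^ (m + 1) := by
  have hmono : StrictMono fun m : ℤ => d ^ m := strictMono_int_of_lt_succ fun m => by
    rw [zpow_add_one]
    exact lt_mul_of_one_lt_right' _ hd
  obtain ⟨k, hk⟩ := harch g⁻¹ hd
  obtain ⟨l, hl⟩ := harch g hd
  have hbdd : ∃ b : ℤ, ∀ m : ℤ, d ^ m ≤ g → m ≤ b := ⟨l, fun m hm =>
    hmono.le_iff_le.1 (hm.trans (by rwa [zpow_natCast]))⟩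
  have hne : ∃ m : ℤ, d ^ m ≤ g := ⟨-k, by rwa [zpow_neg, zpow_natCast, inv_le']⟩
  obtain ⟨m, hm, hmax⟩ := Int.exists_greatest_of_bdd hbdd hne
  exact ⟨m, hm, lt_of_not_ge fun h => (hmax _ h).not_gt (lt_add_one m)⟩

theorem exists_zpow_eq_of_one_covBy {s : H} (hs : 1 ⋖ s) (g : H) : ∃ m : ℤ, g = s ^ m := by
  obtain ⟨m, hm, hm'⟩ := exists_zpow_le_lt harch hs.lt g
  have hle : 1 ≤ (s ^ m)⁻¹ * g := le_inv_mul_iff_mul_le.2 (by simpa using hm)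
  have hlt : (s ^ m)⁻¹ * g < s := by rwa [inv_mul_lt_iff_lt_mul, ← zpow_add_one]
  exact ⟨m, (inv_mul_eq_one.1 (hle.eq_of_not_lt fun h => hs.2 h hlt).symm).symm⟩

-- The bound only involves powers of `d`, which commute, so it collapses to `d ^ 2`.
theorem commutatorElement_lt_mul_self {d : H} (hd : 1 < d) (a b : H) : ⁅a, b⁆ < d * d := by
  obtain ⟨m, hma, ham⟩ := exists_zpow_le_lt harch hd a
  obtain ⟨n, hnb, hbn⟩ := exists_zpow_le_lt harch hd b
  have hainv : a⁻¹ ≤ d ^ (-m) := by rwa [zpow_neg, inv_le_inv_iff]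
  have hbinv : b⁻¹ ≤ d ^ (-n) := by rwa [zpow_neg, inv_le_inv_iff]
  calc ⁅a, b⁆ = a * b * a⁻¹ * b⁻¹ := commutatorElement_def a b
    _ < d ^ (m + 1) * d ^ (n + 1) * d ^ (-m) * d ^ (-n) :=
      mul_lt_mul_of_lt_of_le (mul_lt_mul_of_lt_of_le (mul_lt_mul_of_lt_of_lt ham hbn) hainv)
        hbinv
    _ = d * d := by
      rw [← zpow_add, ← zpow_add, ← zpow_add, ← pow_two, ← zpow_natCast]
      congr 1
      ring

theorem commutatorElement_le_one (a b : H) : ⁅a, b⁆ ≤ 1 := by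
  by_contra! hc
  by_cases hcov : 1 ⋖ ⁅a, b⁆
  · obtain ⟨p, hp⟩ := exists_zpow_eq_of_one_covBy harch hcov a
    obtain ⟨q, hq⟩ := exists_zpow_eq_of_one_covBy harch hcov b
    have hab := Commute.zpow_zpow_self ⁅a, b⁆ p q
    rw [← hp, ← hq] at hab
    exact hc.ne' (commutatorElement_eq_one_iff_mul_comm.2 hab.eq)
  · obtain ⟨d, hd, hdc⟩ := exists_mul_self_le_of_not_one_covBy hc hcov
    exact (commutatorElement_lt_mul_self harch hd a b).not_ge hdc

theorem mul_comm_of_archimedean (a b : H) : a * b = b * a := by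
  refine commutatorElement_eq_one_iff_mul_comm.1
    (le_antisymm (commutatorElement_le_one harch a b) ?_)
  rw [← commutatorElement_inv]
  exact one_le_inv'.2 (commutatorElement_le_one harch b a)

-- Hölder's theorem.
theorem exists_strictMono_map_mul_eq_add :
    ∃ T : H → ℝ, StrictMono T ∧ ∀ a b, T (a * b) = T a + T b := by
  let _ : CommGroup H := { ‹Group H› with mul_comm := mul_comm_of_archimedean harch }
  have : IsOrderedMonoid H :=
    ⟨fun _ _ h _ => mul_le_mul' h le_rfl, fun _ _ h _ => mul_le_mul' le_rfl h⟩
  have : MulArchimedean H := ⟨harch⟩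
  obtain ⟨T, hT⟩ := Archimedean.exists_orderAddMonoidHom_real_injective (Additive H)
  exact ⟨fun a => T (Additive.ofMul a),
    fun _ _ h => (OrderHomClass.mono T).strictMono_of_injective hT h, fun _ _ => map_add T _ _⟩

end Holder

theorem exists_lt_pow_apply {G : Subgroup HomeoR} {f : G} (hf : ∀ z, z < (f : HomeoR) z)
    (x y : ℝ) : ∃ n : ℕ, y < ((f ^ n : G) : HomeoR) x := by
  simpa only [Subgroup.coe_pow, RelIso.coe_pow] using
    exists_lt_iterate_of_forall_lt_apply (f : HomeoR).continuous hf x y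

def ActsFreely (G : Subgroup HomeoR) : Prop := ∀ g ∈ G, g ≠ 1 → FixSet g = ∅

namespace ActsFreely

variable {G : Subgroup HomeoR}

theorem eq_of_apply_eq (hG : ActsFreely G) {a b : G} {x : ℝ}
    (h : (a : HomeoR) x = (b : HomeoR) x) : a = b := by
  by_contra hab
  have hfix := hG _ (a⁻¹ * b).2 (by simpa [inv_mul_eq_one] using hab)
  refine eq_empty_iff_forall_notMem.1 hfix x ?_
  show (a : HomeoR).symm ((b : HomeoR) x) = x
  rw [← h, OrderIso.symm_apply_apply]

theorem lt_apply_of_lt_apply (hG : ActsFreely G) {f : G} {x : ℝ} (hx : x < (f : HomeoR) x)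
    (y : ℝ) : y < (f : HomeoR) y := by
  have hf : (f : HomeoR) ≠ 1 := fun h => hx.ne' (by simp [h])
  have hfix : ∀ z, (f : HomeoR) z ≠ z := fun z => eq_empty_iff_forall_notMem.1 (hG f f.2 hf) z
  exact lt_apply_of_lt_apply_of_ne (f : HomeoR).continuous hfix hx y

theorem apply_lt_apply (hG : ActsFreely G) {a b : G} {x : ℝ}
    (h : (a : HomeoR) x < (b : HomeoR) x) (y : ℝ) : (a : HomeoR) y < (b : HomeoR) y :=
  (a : HomeoR).lt_symm_apply.1 <|
    hG.lt_apply_of_lt_apply (f := a⁻¹ * b) ((a : HomeoR).lt_symm_apply.2 h) y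

theorem apply_le_apply (hG : ActsFreely G) {a b : G} {x : ℝ}
    (h : (a : HomeoR) x ≤ (b : HomeoR) x) (y : ℝ) : (a : HomeoR) y ≤ (b : HomeoR) y := by
  rcases h.lt_or_eq with h | h
  · exact (hG.apply_lt_apply h y).le
  · rw [hG.eq_of_apply_eq h]

theorem eq_bot_or_exists_forall_lt_apply (hG : ActsFreely G) :
    G = ⊥ ∨ ∃ f : G, ∀ z, z < (f : HomeoR) z := by
  refine or_iff_not_imp_left.2 fun hbot => ?_
  obtain ⟨g, hg⟩ := Subgroup.ne_bot_iff_exists_ne_one.1 hbot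
  have hg0 : (g : HomeoR) 0 ≠ 0 := fun h => hg (hG.eq_of_apply_eq (b := 1) h)
  rcases hg0.lt_or_gt with hneg | hpos
  · exact ⟨g⁻¹, hG.lt_apply_of_lt_apply ((g : HomeoR).lt_symm_apply.2 hneg)⟩
  · exact ⟨g, hG.lt_apply_of_lt_apply hpos⟩

theorem exists_map_mul_eq_add_and_le_iff (hG : ActsFreely G) :
    ∃ T : G → ℝ, (∀ a b, T (a * b) = T a + T b) ∧
      ∀ a b : G, T a ≤ T b ↔ (a : HomeoR) 0 ≤ (b : HomeoR) 0 := by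
  let _ : LinearOrder G := LinearOrder.lift' (fun g : G => (g : HomeoR) 0)
    fun _ _ h => hG.eq_of_apply_eq h
  have : MulLeftMono G := ⟨fun c _ _ h => (c : HomeoR).monotone h⟩
  have : MulRightMono G := ⟨fun c _ _ h => hG.apply_le_apply h ((c : HomeoR) 0)⟩
  have harch : ∀ (x : G) {y : G}, 1 < y → ∃ n : ℕ, x ≤ y ^ n := by
    intro x y hy
    obtain ⟨n, hn⟩ := exists_lt_pow_apply (hG.lt_apply_of_lt_apply hy) 0 ((x : HomeoR) 0)
    exact ⟨n, hn.le⟩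
  obtain ⟨T, hT, hmul⟩ := _root_.exists_strictMono_map_mul_eq_add harch
  exact ⟨T, hmul, fun a b => hT.le_iff_le⟩

end ActsFreely

theorem Monotone.stieltjesFunction_apply_eq_add {F : ℝ → ℝ} (hF : Monotone F) (e : ℝ ≃o ℝ)
    {c : ℝ} (h : ∀ x, F (e x) = c + F x) (x : ℝ) :
    hF.stieltjesFunction (e x) = c + hF.stieltjesFunction x := by
  have himg : F '' Ioi (e x) = OrderIso.addLeft c '' (F '' Ioi x) := by
    rw [← e.image_Ioi, image_image, image_image]
    exact image_congr fun y _ => h y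
  rw [hF.stieltjesFunction_eq, hF.stieltjesFunction_eq, hF.rightLim_eq_sInf, hF.rightLim_eq_sInf,
    himg, ← (OrderIso.addLeft c).map_csInf' (nonempty_Ioi.image F) (hF.map_bddBelow bddBelow_Ioi)]
  rfl

theorem StieltjesFunction.map_measure_eq_self_of_apply_eq_add (S : StieltjesFunction ℝ)
    (e : ℝ ≃o ℝ) {c : ℝ} (h : ∀ x, S (e x) = c + S x) : S.measure.map e = S.measure := by
  refine (Measure.ext_of_Ioc _ _ fun a b _ => ?_).symm
  rw [Measure.map_apply e.continuous.measurable measurableSet_Ioc, e.preimage_Ioc, S.measure_Ioc,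
    S.measure_Ioc, ← e.apply_symm_apply a, ← e.apply_symm_apply b, h, h]
  simp

section Semiconj

variable {G : Subgroup HomeoR} {T : G → ℝ}

noncomputable def semiconjFun (T : G → ℝ) (x : ℝ) : ℝ :=
  sSup (T '' {g : G | (g : HomeoR) 0 ≤ x})

theorem nonempty_setOf_apply_zero_le {f : G} (hf : ∀ z, z < (f : HomeoR) z) (x : ℝ) :
    {g : G | (g : HomeoR) 0 ≤ x}.Nonempty := by
  obtain ⟨n, hn⟩ := exists_lt_pow_apply hf x 0
  exact ⟨(f ^ n)⁻¹, ((f ^ n : G) : HomeoR).symm_apply_le.2 hn.le⟩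

theorem bddAbove_image_setOf_apply_zero_le
    (hT : ∀ a b : G, (a : HomeoR) 0 ≤ (b : HomeoR) 0 → T a ≤ T b)
    {f : G} (hf : ∀ z, z < (f : HomeoR) z) (x : ℝ) :
    BddAbove (T '' {g : G | (g : HomeoR) 0 ≤ x}) := by
  obtain ⟨n, hn⟩ := exists_lt_pow_apply hf 0 x
  exact ⟨T (f ^ n), forall_mem_image.2 fun g hg => hT _ _ (hg.trans hn.le)⟩

theorem monotone_semiconjFun (hT : ∀ a b : G, (a : HomeoR) 0 ≤ (b : HomeoR) 0 → T a ≤ T b)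
    {f : G} (hf : ∀ z, z < (f : HomeoR) z) : Monotone (semiconjFun T) := fun _ y hxy =>
  csSup_le_csSup (bddAbove_image_setOf_apply_zero_le hT hf y)
    ((nonempty_setOf_apply_zero_le hf _).image T) (image_mono fun _ hg => le_trans hg hxy)

theorem semiconjFun_apply (hadd : ∀ a b, T (a * b) = T a + T b)
    (hT : ∀ a b : G, (a : HomeoR) 0 ≤ (b : HomeoR) 0 → T a ≤ T b)
    {f : G} (hf : ∀ z, z < (f : HomeoR) z) (g : G) (x : ℝ) :
    semiconjFun T ((g : HomeoR) x) = T g + semiconjFun T x := by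
  set s := {h : G | (h : HomeoR) 0 ≤ x}
  have hset : {h : G | (h : HomeoR) 0 ≤ (g : HomeoR) x} = (g * ·) '' s := by
    rw [image_mul_left]
    ext h
    exact (g : HomeoR).symm_apply_le.symm
  have himg : T '' ((g * ·) '' s) = OrderIso.addLeft (T g) '' (T '' s) := by
    simp only [image_image, hadd]
    rfl
  rw [semiconjFun, hset, himg, ← OrderIso.map_csSup' _
    ((nonempty_setOf_apply_zero_le hf x).image T) (bddAbove_image_setOf_apply_zero_le hT hf x)]
  rfl

end Semiconj

theorem invariantRadon_bot_volume : InvariantRadon ⊥ volume := by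
  refine ⟨NeZero.ne volume, inferInstance, fun g hg => ?_⟩
  rw [Subgroup.mem_bot.1 hg]
  exact Measure.map_id

theorem free_action_invariant_radon (G : Subgroup HomeoR)
    (hfree : ∀ g ∈ G, g ≠ 1 → FixSet g = ∅) :
    ∃ μ : Measure ℝ, InvariantRadon G μ := by
  have hG : ActsFreely G := hfree
  obtain rfl | ⟨f, hf⟩ := hG.eq_bot_or_exists_forall_lt_apply
  · exact ⟨volume, invariantRadon_bot_volume⟩
  obtain ⟨T, hadd, hle⟩ := hG.exists_map_mul_eq_add_and_le_iff
  have hT : ∀ a b : G, (a : HomeoR) 0 ≤ (b : HomeoR) 0 → T a ≤ T b := fun a b => (hle a b).2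
  let S := (monotone_semiconjFun hT hf).stieltjesFunction
  have hS (g : G) (x : ℝ) : S ((g : HomeoR) x) = T g + S x :=
    Monotone.stieltjesFunction_apply_eq_add _ _ (semiconjFun_apply hadd hT hf g) x
  have hTf : 0 < T f := by
    have hT1 : T 1 = 0 := by simpa using hadd 1 1
    exact hT1 ▸ lt_of_not_ge fun h => (hf 0).not_ge ((hle f 1).1 h)
  refine ⟨S.measure, fun h0 => ?_, inferInstance,
    fun g hg => S.map_measure_eq_self_of_apply_eq_add _ (hS ⟨g, hg⟩)⟩
  have hIoc := S.measure_Ioc 0 ((f : HomeoR) 0)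
  rw [h0, hS, add_sub_cancel_right] at hIoc
  simp only [Measure.coe_zero, Pi.zero_apply] at hIoc
  exact (ENNReal.ofReal_pos.2 hTf).ne hIoc
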